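/- arXiv:1704.08618 — 4 statements merged into one kernel-verified Lean document; each statement's English description precedes it below -/
import Mathlib

section
/- Let p₁ ≥ 2 be an integer, ω = exp(2πi/p₁), and consider the Puiseux series λ_{h+1}(k) = λ₀ + Σ_{n≥1} m_n ω^{nh} (k−k₀)^{n/p₁} for h = 0,1,…,p₁−1, convergent in a neighborhood of k₀. If Re λ_{h+1}(k) ≤ Re λ₀ for all h and all k in a neighborhood of k₀, and if m_n is the first coefficient with Re m_n ≠ 0, then n/p₁ is an even integer l and Re m_{l p₁} < 0. -/
open Complex Real Filter


set_option maxHeartbeats 2000000 in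
lemma lemA (c : ℕ → ℝ) (δ : ℝ) (hδ : 0 < δ)
    (H : ∀ t : ℝ, 0 < t → t < δ → ∃ S : ℝ, S ≤ 0 ∧ HasSum (fun j : ℕ => c j * t ^ (j + 1)) S)
    (n : ℕ) (hz : ∀ j, j < n → c j = 0) : c n ≤ 0 := by
  by_contra hc
  push_neg at hc
  set t₀ : ℝ := δ / 2 with ht₀def
  have ht₀ : 0 < t₀ := by positivity
  have ht₀δ : t₀ < δ := by simp [ht₀def]; linarith
  obtain ⟨S₀, _, hS₀⟩ := H t₀ ht₀ ht₀δ
  -- bound on terms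
  have hb : BddAbove (Set.range fun j => |c j * t₀ ^ (j + 1)|) := by
    have := hS₀.summable.tendsto_atTop_zero
    exact (this.abs).bddAbove_range
  obtain ⟨M, hM⟩ := hb
  rw [mem_upperBounds] at hM
  have hM' : ∀ j, |c j| * t₀ ^ (j + 1) ≤ max M 1 := by
    intro j
    have h := hM _ ⟨j, rfl⟩
    simp only at h
    rw [abs_mul, abs_of_pos (by positivity : (0:ℝ) < t₀ ^ (j+1))] at h
    exact h.trans (le_max_left _ _)
  set M' : ℝ := max M 1 with hM'def
  have hM'pos : 0 < M' := lt_of_lt_of_le one_pos (le_max_right _ _)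
  -- choose r
  set r : ℝ := min (1/2) (c n * t₀ ^ (n + 1) / (4 * M')) with hrdef
  have hr0 : 0 < r := by
    apply lt_min (by norm_num)
    positivity
  have hr2 : r ≤ 1/2 := min_le_left _ _
  have hr1 : r < 1 := lt_of_le_of_lt hr2 (by norm_num)
  set t : ℝ := r * t₀ with htdef
  have ht0 : 0 < t := by positivity
  have htδ : t < δ := by
    have : t ≤ t₀ / 2 := by
      rw [htdef]
      nlinarith
    linarith
  obtain ⟨S, hS0, hSsum⟩ := H t ht0 htδ
  -- split
  have h' : HasSum (fun j => c j * t ^ (j + 1))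
      ((S - ∑ i ∈ Finset.range (n + 1), c i * t ^ (i + 1)) +
        ∑ i ∈ Finset.range (n + 1), c i * t ^ (i + 1)) := by
    rw [sub_add_cancel]; exact hSsum
  have hg : HasSum (fun j => c (j + (n + 1)) * t ^ (j + (n + 1) + 1))
      (S - ∑ i ∈ Finset.range (n + 1), c i * t ^ (i + 1)) :=
    (hasSum_nat_add_iff (n + 1)).mpr h'
  set a : ℝ := S - ∑ i ∈ Finset.range (n + 1), c i * t ^ (i + 1) with hadef
  have hsum_eq : ∑ i ∈ Finset.range (n + 1), c i * t ^ (i + 1) = c n * t ^ (n + 1) := by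
    rw [Finset.sum_eq_single n]
    · intro i hi hne
      have : i < n := by
        rcases lt_or_eq_of_le (Nat.lt_succ_iff.mp (Finset.mem_range.mp hi)) with h | h
        · exact h
        · exact absurd h hne
      simp [hz i this]
    · intro h; simp at h
  -- bound |a|
  have hgeom : Summable (fun j : ℕ => M' * r ^ (n + 2) * r ^ j) :=
    (summable_geometric_of_lt_one hr0.le hr1).mul_left _
  have habs : ∀ j, |c (j + (n + 1)) * t ^ (j + (n + 1) + 1)| ≤ M' * r ^ (n + 2) * r ^ j := by
    intro j
    rw [abs_mul, abs_of_pos (by positivity : (0:ℝ) < t ^ (j + (n+1) + 1)), htdef, mul_pow]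
    have h1 : |c (j + (n + 1))| * t₀ ^ (j + (n + 1) + 1) ≤ M' := hM' _
    have h2 : (0:ℝ) < t₀ ^ (j + (n+1) + 1) := by positivity
    have h3 : |c (j + (n+1))| ≤ M' / t₀ ^ (j + (n+1) + 1) := by
      rw [le_div_iff₀ h2]; exact h1
    calc |c (j + (n + 1))| * (r ^ (j + (n+1) + 1) * t₀ ^ (j + (n+1) + 1))
        ≤ M' / t₀ ^ (j + (n+1) + 1) * (r ^ (j + (n+1) + 1) * t₀ ^ (j + (n+1) + 1)) := by
          apply mul_le_mul_of_nonneg_right h3; positivity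
      _ = M' * r ^ (j + (n+1) + 1) := by field_simp
      _ = M' * r ^ (n + 2) * r ^ j := by
          have he : j + (n+1) + 1 = (n+2) + j := by omega
          rw [he, pow_add]; ring
  have haleb : |a| ≤ M' * r ^ (n + 2) * (1 - r)⁻¹ := by
    have h1 : |a| ≤ ∑' j, |c (j + (n + 1)) * t ^ (j + (n + 1) + 1)| := by
      rw [← hg.tsum_eq]
      simpa only [Real.norm_eq_abs] using
        norm_tsum_le_tsum_norm (f := fun j => c (j + (n + 1)) * t ^ (j + (n + 1) + 1))
          (by simpa only [Real.norm_eq_abs] using hg.summable.abs)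
    have h2 : ∑' j, |c (j + (n + 1)) * t ^ (j + (n + 1) + 1)| ≤ ∑' j, M' * r ^ (n + 2) * r ^ j := by
      apply Summable.tsum_le_tsum habs _ hgeom
      exact hg.summable.abs
    calc |a| ≤ ∑' j, M' * r ^ (n + 2) * r ^ j := h1.trans h2
      _ = M' * r ^ (n + 2) * (1 - r)⁻¹ := by
          rw [tsum_mul_left, tsum_geometric_of_lt_one hr0.le hr1]
  -- conclude
  have hkey : c n * t ^ (n + 1) ≤ M' * r ^ (n + 2) * (1 - r)⁻¹ := by
    have : c n * t ^ (n + 1) = S - a := by rw [hadef, hsum_eq]; ring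
    rw [this]
    have := neg_abs_le a
    linarith [haleb, hS0, abs_nonneg a]
  have hinv : (1 - r)⁻¹ ≤ 2 := by
    rw [inv_le_comm₀ (by linarith) (by norm_num)]
    linarith
  have hbound : c n * t ^ (n + 1) ≤ 2 * M' * r ^ (n + 2) := by
    have h1 : (0:ℝ) ≤ M' * r ^ (n+2) := by positivity
    calc c n * t ^ (n+1) ≤ M' * r ^ (n+2) * (1 - r)⁻¹ := hkey
      _ ≤ M' * r ^ (n+2) * 2 := by nlinarith
      _ = 2 * M' * r ^ (n+2) := by ring
  -- t^(n+1) = r^(n+1) t₀^(n+1), r^(n+2) = r * r^(n+1)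
  have hfin : c n * t₀ ^ (n + 1) ≤ 2 * M' * r := by
    have hrp : (0:ℝ) < r ^ (n + 1) := by positivity
    have : c n * (r ^ (n+1) * t₀ ^ (n + 1)) ≤ 2 * M' * (r * r ^ (n+1)) := by
      calc c n * (r ^ (n+1) * t₀ ^ (n+1)) = c n * t ^ (n+1) := by rw [htdef, mul_pow]
        _ ≤ 2 * M' * r ^ (n+2) := hbound
        _ = 2 * M' * (r * r ^ (n+1)) := by ring
    nlinarith
  have hrle : r ≤ c n * t₀ ^ (n + 1) / (4 * M') := min_le_right _ _
  have : c n * t₀ ^ (n + 1) ≤ 2 * M' * (c n * t₀ ^ (n+1) / (4 * M')) := by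
    calc c n * t₀ ^ (n+1) ≤ 2 * M' * r := hfin
      _ ≤ 2 * M' * (c n * t₀ ^ (n+1) / (4 * M')) := by
          apply mul_le_mul_of_nonneg_left hrle; positivity
  have h4 : 2 * M' * (c n * t₀ ^ (n+1) / (4 * M')) = c n * t₀ ^ (n+1) / 2 := by
    field_simp; ring
  rw [h4] at this
  have hpos : 0 < c n * t₀ ^ (n + 1) := by positivity
  linarith

lemma cpow_pos_eq (t : ℝ) (ht : 0 < t) (p j : ℕ) (hp : 0 < p) :
    ((t ^ p : ℝ) : ℂ) ^ ((j : ℂ) / (p : ℂ)) = ((t : ℂ)) ^ (j : ℕ) := by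
  have h1 : ((j : ℂ) / (p : ℂ)) = (((j : ℝ) / (p : ℝ) : ℝ) : ℂ) := by push_cast; ring
  rw [h1, ← Complex.ofReal_cpow (by positivity)]
  have h2 : (t ^ p : ℝ) ^ ((j : ℝ) / (p : ℝ)) = t ^ j := by
    rw [← Real.rpow_natCast t p, ← Real.rpow_mul ht.le]
    have : (p : ℝ) * ((j : ℝ) / (p : ℝ)) = (j : ℝ) := by
      field_simp
    rw [this, Real.rpow_natCast]
  rw [h2]
  push_cast; ring

lemma cpow_neg_eq (t : ℝ) (ht : 0 < t) (p j : ℕ) (hp : 0 < p) :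
    ((-(t ^ p) : ℝ) : ℂ) ^ ((j : ℂ) / (p : ℂ)) =
      ((t : ℂ)) ^ (j : ℕ) * Complex.exp ((Real.pi : ℂ) * Complex.I * (j : ℂ) / (p : ℂ)) := by
  have htp : (0:ℝ) < t ^ p := by positivity
  have hne : ((-(t ^ p) : ℝ) : ℂ) ≠ 0 := by
    simp only [ne_eq, Complex.ofReal_eq_zero]
    intro h; linarith [htp, neg_eq_zero.mp h]
  rw [Complex.cpow_def_of_ne_zero hne]
  have hlog : Complex.log ((-(t ^ p) : ℝ) : ℂ) = (Real.log (t ^ p) : ℂ) + Real.pi * Complex.I := by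
    rw [Complex.log]
    have habs : ‖((-(t ^ p) : ℝ) : ℂ)‖ = t ^ p := by
      rw [Complex.norm_real, Real.norm_eq_abs, abs_of_neg (by linarith)]; ring
    have harg : Complex.arg ((-(t ^ p) : ℝ) : ℂ) = Real.pi :=
      Complex.arg_ofReal_of_neg (by linarith)
    rw [habs, harg]
  rw [hlog]
  rw [add_mul, Complex.exp_add]
  congr 1
  · -- exp (log(t^p) * (j/p)) = t ^ j
    have : (Real.log (t ^ p) : ℂ) * ((j:ℂ) / (p:ℂ)) = ((Real.log (t^p) * (j / p) : ℝ) : ℂ) := by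
      push_cast; ring
    rw [this, ← Complex.ofReal_exp]
    have : Real.exp (Real.log (t ^ p) * ((j:ℝ) / (p:ℝ))) = (t ^ p) ^ ((j:ℝ)/(p:ℝ)) := by
      rw [Real.rpow_def_of_pos htp]
    rw [show Real.log (t^p) * ((j:ℝ)/(p:ℝ)) = Real.log (t^p) * (j/p) from rfl] at this
    rw [this]
    have h2 : (t ^ p : ℝ) ^ ((j : ℝ) / (p : ℝ)) = t ^ j := by
      rw [← Real.rpow_natCast t p, ← Real.rpow_mul ht.le]
      have : (p : ℝ) * ((j : ℝ) / (p : ℝ)) = (j : ℝ) := by field_simp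
      rw [this, Real.rpow_natCast]
    rw [h2]; push_cast; ring
  · congr 1; ring

lemma exp_pair (θ : ℝ) (z : ℤ) :
    Complex.exp ((θ : ℂ) * Complex.I) +
      Complex.exp (((2 * Real.pi * z - θ : ℝ) : ℂ) * Complex.I) = ((2 * Real.cos θ : ℝ) : ℂ) := by
  have h1 : Complex.exp (((2 * Real.pi * z - θ : ℝ) : ℂ) * Complex.I) =
      Complex.exp (-((θ:ℂ) * Complex.I)) := by
    have : ((2 * Real.pi * z - θ : ℝ) : ℂ) * Complex.I =
        -((θ:ℂ) * Complex.I) + (z : ℂ) * (2 * Real.pi * Complex.I) := by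
      push_cast; ring
    rw [this, Complex.exp_add, Complex.exp_int_mul_two_pi_mul_I, mul_one]
  rw [h1, show -((θ:ℂ) * Complex.I) = ((-θ : ℝ) : ℂ) * Complex.I by push_cast; ring,
    Complex.exp_mul_I, Complex.exp_mul_I, Complex.ofReal_neg, Complex.cos_neg, Complex.sin_neg]
  rw [← Complex.ofReal_cos]
  push_cast
  ring

lemma phase_right (p h j : ℕ) (hp : 0 < p) (hh : h < p) :
    Complex.exp (2 * (Real.pi : ℂ) * Complex.I * ((j * h : ℕ) : ℂ) / (p : ℂ)) +
      Complex.exp (2 * (Real.pi : ℂ) * Complex.I * ((j * ((p - h) % p) : ℕ) : ℂ) / (p : ℂ)) =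
      ((2 * Real.cos (2 * Real.pi * j * h / p) : ℝ) : ℂ) := by
  have hpR : (p : ℝ) ≠ 0 := Nat.cast_ne_zero.mpr hp.ne'
  have e1 : 2 * (Real.pi : ℂ) * Complex.I * ((j * h : ℕ) : ℂ) / (p : ℂ) =
      ((2 * Real.pi * j * h / p : ℝ) : ℂ) * Complex.I := by push_cast; ring
  rcases Nat.eq_zero_or_pos h with h0 | hpos
  · subst h0
    have e2 : (p - 0) % p = 0 := by simp
    rw [e2]
    simp only [Nat.mul_zero, Nat.cast_zero, mul_zero, zero_div, Complex.exp_zero]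
    norm_num
  · have hlt : p - h < p := by omega
    have e2 : (p - h) % p = p - h := Nat.mod_eq_of_lt hlt
    rw [e1, e2]
    have e3 : 2 * (Real.pi : ℂ) * Complex.I * ((j * (p - h) : ℕ) : ℂ) / (p : ℂ) =
        ((2 * Real.pi * (j : ℤ) - 2 * Real.pi * j * h / p : ℝ) : ℂ) * Complex.I := by
      have hc : ((j * (p - h) : ℕ) : ℂ) = (j : ℂ) * ((p : ℂ) - (h : ℂ)) := by
        push_cast [Nat.cast_sub hh.le]; ring
      rw [hc]
      have hpC : (p : ℂ) ≠ 0 := Nat.cast_ne_zero.mpr hp.ne'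
      push_cast
      field_simp
    rw [e3]
    exact exp_pair _ (j : ℤ)

lemma phase_left (p h j : ℕ) (hp : 0 < p) (hh : h < p) :
    Complex.exp (2 * (Real.pi : ℂ) * Complex.I * ((j * h : ℕ) : ℂ) / (p : ℂ)) *
        Complex.exp ((Real.pi : ℂ) * Complex.I * (j : ℂ) / (p : ℂ)) +
      Complex.exp (2 * (Real.pi : ℂ) * Complex.I * ((j * (p - 1 - h) : ℕ) : ℂ) / (p : ℂ)) *
        Complex.exp ((Real.pi : ℂ) * Complex.I * (j : ℂ) / (p : ℂ)) =
      ((2 * Real.cos (Real.pi * j * (2 * h + 1) / p) : ℝ) : ℂ) := by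
  have hpR : (p : ℝ) ≠ 0 := Nat.cast_ne_zero.mpr hp.ne'
  have hpC : (p : ℂ) ≠ 0 := Nat.cast_ne_zero.mpr hp.ne'
  rw [← Complex.exp_add, ← Complex.exp_add]
  have e1 : 2 * (Real.pi : ℂ) * Complex.I * ((j * h : ℕ) : ℂ) / (p : ℂ) +
      (Real.pi : ℂ) * Complex.I * (j : ℂ) / (p : ℂ) =
      ((Real.pi * j * (2 * h + 1) / p : ℝ) : ℂ) * Complex.I := by
    push_cast
    field_simp [hpC]
  have e2 : 2 * (Real.pi : ℂ) * Complex.I * ((j * (p - 1 - h) : ℕ) : ℂ) / (p : ℂ) +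
      (Real.pi : ℂ) * Complex.I * (j : ℂ) / (p : ℂ) =
      ((2 * Real.pi * (j : ℤ) - Real.pi * j * (2 * h + 1) / p : ℝ) : ℂ) * Complex.I := by
    have hc : ((j * (p - 1 - h) : ℕ) : ℂ) = (j : ℂ) * ((p : ℂ) - 1 - (h : ℂ)) := by
      have : (((p - 1 - h : ℕ)) : ℂ) = (p : ℂ) - 1 - (h : ℂ) := by
        have h1 : h ≤ p - 1 := by omega
        push_cast [Nat.cast_sub h1, Nat.cast_sub (by omega : 1 ≤ p)]
        ring
      push_cast [this]
      ring
    rw [hc]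
    push_cast
    field_simp [hpC]
    ring
  rw [e1, e2]
  exact exp_pair _ (j : ℤ)

lemma term_right (p h j : ℕ) (hp : 0 < p) (hh : h < p) (t : ℝ) (ht : 0 < t) (z : ℂ) :
    (z * Complex.exp (2 * (Real.pi : ℂ) * Complex.I * ((j * h : ℕ) : ℂ) / (p : ℂ)) *
        ((t ^ p : ℝ) : ℂ) ^ ((j : ℂ) / (p : ℂ)) +
      z * Complex.exp (2 * (Real.pi : ℂ) * Complex.I * ((j * ((p - h) % p) : ℕ) : ℂ) / (p : ℂ)) *
        ((t ^ p : ℝ) : ℂ) ^ ((j : ℂ) / (p : ℂ))).re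
    = 2 * Real.cos (2 * Real.pi * j * h / p) * z.re * t ^ j := by
  rw [cpow_pos_eq t ht p j hp,
    show ∀ a b X : ℂ, z * a * X + z * b * X = z * (a + b) * X from fun a b X => by ring,
    phase_right p h j hp hh,
    show ((t : ℂ)) ^ (j : ℕ) = ((t ^ j : ℝ) : ℂ) by push_cast; ring]
  simp only [Complex.mul_re, Complex.ofReal_re, Complex.ofReal_im, mul_zero, zero_mul,
    sub_zero]
  ring

lemma term_left (p h j : ℕ) (hp : 0 < p) (hh : h < p) (t : ℝ) (ht : 0 < t) (z : ℂ) :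
    (z * Complex.exp (2 * (Real.pi : ℂ) * Complex.I * ((j * h : ℕ) : ℂ) / (p : ℂ)) *
        ((-(t ^ p) : ℝ) : ℂ) ^ ((j : ℂ) / (p : ℂ)) +
      z * Complex.exp (2 * (Real.pi : ℂ) * Complex.I * ((j * (p - 1 - h) : ℕ) : ℂ) / (p : ℂ)) *
        ((-(t ^ p) : ℝ) : ℂ) ^ ((j : ℂ) / (p : ℂ))).re
    = 2 * Real.cos (Real.pi * j * (2 * h + 1) / p) * z.re * t ^ j := by
  rw [cpow_neg_eq t ht p j hp,
    show ∀ a b X e : ℂ, z * a * (X * e) + z * b * (X * e) = z * (a * e + b * e) * X from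
      fun a b X e => by ring,
    phase_left p h j hp hh,
    show ((t : ℂ)) ^ (j : ℕ) = ((t ^ j : ℝ) : ℂ) by push_cast; ring]
  simp only [Complex.mul_re, Complex.ofReal_re, Complex.ofReal_im, mul_zero, zero_mul,
    sub_zero]
  ring

lemma cos_lower : ∀ (K : ℕ) (x : ℝ), (∀ k ≤ K, 0 ≤ Real.cos (2 ^ k * x)) →
    Real.cos (Real.pi / 2 ^ (K + 1)) ≤ Real.cos x := by
  intro K
  induction K with
  | zero =>
    intro x hx
    have h0 := hx 0 le_rfl
    simpa [Real.cos_pi_div_two] using h0.trans_eq (by rw [pow_zero, one_mul])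
  | succ K ih =>
    intro x hx
    have h2x : Real.cos (Real.pi / 2 ^ (K + 1)) ≤ Real.cos (2 * x) := by
      apply ih (2 * x)
      intro k hk
      have := hx (k + 1) (by omega)
      rwa [pow_succ, show (2:ℝ) ^ k * 2 * x = 2 ^ k * (2 * x) by ring] at this
    have h0 : 0 ≤ Real.cos x := by
      have := hx 0 (by omega); rwa [pow_zero, one_mul] at this
    have hsq : Real.cos x ^ 2 = 1 / 2 + Real.cos (2 * x) / 2 := Real.cos_sq x
    have harg : 2 * (Real.pi / 2 ^ (K + 2)) = Real.pi / 2 ^ (K + 1) := by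
      rw [pow_succ]
      field_simp
    have hsq2 : Real.cos (Real.pi / 2 ^ (K + 2)) ^ 2 = 1 / 2 + Real.cos (Real.pi / 2 ^ (K + 1)) / 2 := by
      rw [Real.cos_sq, harg]
    have hnn : 0 ≤ Real.cos (Real.pi / 2 ^ (K + 2)) := by
      apply Real.cos_nonneg_of_mem_Icc
      constructor
      · have : (0:ℝ) ≤ Real.pi / 2 ^ (K + 2) := by positivity
        linarith [Real.pi_pos]
      · have h22 : (2:ℝ) ≤ 2 ^ (K + 2) := by
          calc (2:ℝ) = 2 ^ 1 := (pow_one 2).symm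
            _ ≤ 2 ^ (K + 2) := by
                apply pow_le_pow_right₀ (by norm_num)
                omega
        calc Real.pi / 2 ^ (K + 2) ≤ Real.pi / 2 := by gcongr
          _ ≤ Real.pi / 2 := le_rfl
    nlinarith [hsq2, hsq, h2x, h0, hnn]

lemma cos_one (x : ℝ) (hx : ∀ b : ℕ, 0 ≤ Real.cos (b * x)) : Real.cos x = 1 := by
  have h1 : ∀ K : ℕ, Real.cos (Real.pi / 2 ^ (K + 1)) ≤ Real.cos x := by
    intro K
    apply cos_lower K x
    intro k _
    have := hx (2 ^ k)
    rwa [Nat.cast_pow, Nat.cast_ofNat] at this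
  have ht : Tendsto (fun K : ℕ => Real.cos (Real.pi / 2 ^ (K + 1))) atTop (nhds 1) := by
    have h2 : Tendsto (fun K : ℕ => Real.pi / 2 ^ (K + 1)) atTop (nhds 0) := by
      have hg : Tendsto (fun K : ℕ => ((1:ℝ)/2) ^ (K + 1)) atTop (nhds 0) :=
        (tendsto_pow_atTop_nhds_zero_of_lt_one (by norm_num) (by norm_num)).comp
          (tendsto_add_atTop_nat 1)
      have := hg.const_mul Real.pi
      simpa [div_eq_mul_inv, mul_pow, mul_comm] using this
    have h3 := (Real.continuous_cos.tendsto 0).comp h2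
    rw [Real.cos_zero] at h3
    exact h3
  have := le_of_tendsto ht (Filter.Eventually.of_forall h1)
  exact le_antisymm (Real.cos_le_one x) this

lemma keyIneq (p₁ : ℕ) (hp : 2 ≤ p₁) (lam₀ : ℂ) (m : ℕ → ℂ) (k₀ ε : ℝ) (hε : 0 < ε)
    (lam : ℕ → ℝ → ℂ)
    (hseries : ∀ h < p₁, ∀ k : ℝ, |k - k₀| < ε →
      HasSum (fun n : ℕ =>
        m (n + 1) *
          Complex.exp (2 * (Real.pi : ℂ) * Complex.I * (((n + 1) * h : ℕ) : ℂ) / (p₁ : ℂ)) *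
          ((k - k₀ : ℝ) : ℂ) ^ (((n + 1 : ℕ) : ℂ) / (p₁ : ℂ)))
        (lam h k - lam₀))
    (hmax : ∀ h < p₁, ∀ k : ℝ, |k - k₀| < ε → (lam h k).re ≤ lam₀.re)
    (n : ℕ) (hn1 : 1 ≤ n)
    (hprev : ∀ j, 1 ≤ j → j < n → (m j).re = 0)
    (b : ℕ) (hb : b < 2 * p₁) :
    Real.cos (Real.pi * n * b / p₁) * (m n).re ≤ 0 := by
  have hp0 : 0 < p₁ := by omega
  set δ : ℝ := min 1 ε with hδdef
  have hδ : 0 < δ := lt_min one_pos hε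
  have key := lemA (fun j => 2 * Real.cos (Real.pi * ((j + 1 : ℕ) : ℝ) * b / p₁) * (m (j + 1)).re)
      δ hδ ?_ (n - 1) ?_
  · have hn : n - 1 + 1 = n := by omega
    simp only [hn] at key
    linarith
  · -- main H
    intro t ht htδ
    have ht1 : t ≤ 1 := le_of_lt (lt_of_lt_of_le htδ (min_le_left _ _))
    have htε : t < ε := lt_of_lt_of_le htδ (min_le_right _ _)
    have hxp : 0 < t ^ p₁ := by positivity
    have hxε : t ^ p₁ < ε := by
      calc t ^ p₁ ≤ t ^ 1 := pow_le_pow_of_le_one ht.le ht1 (by omega)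
        _ = t := pow_one t
        _ < ε := htε
    rcases Nat.even_or_odd b with he | ho
    · -- even case, right side
      obtain ⟨h, rfl⟩ := he
      have hhp : h < p₁ := by omega
      have hh' : (p₁ - h) % p₁ < p₁ := Nat.mod_lt _ hp0
      set k : ℝ := k₀ + t ^ p₁ with hkdef
      have hkk : k - k₀ = t ^ p₁ := by rw [hkdef]; ring
      have hkabs : |k - k₀| < ε := by rw [hkk, abs_of_pos hxp]; exact hxε
      have hs1 := hseries h hhp k hkabs
      have hs2 := hseries ((p₁ - h) % p₁) hh' k hkabs
      rw [hkk] at hs1 hs2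
      have hre := Complex.hasSum_re (hs1.add hs2)
      refine ⟨((lam h k - lam₀) + (lam ((p₁ - h) % p₁) k - lam₀)).re, ?_, ?_⟩
      · have h1 := hmax h hhp k hkabs
        have h2 := hmax _ hh' k hkabs
        simp only [Complex.add_re, Complex.sub_re]
        linarith
      · have heq : (fun j : ℕ =>
            (m (j + 1) *
              Complex.exp (2 * (Real.pi : ℂ) * Complex.I * (((j + 1) * h : ℕ) : ℂ) / (p₁ : ℂ)) *
              ((t ^ p₁ : ℝ) : ℂ) ^ (((j + 1 : ℕ) : ℂ) / (p₁ : ℂ)) +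
             m (j + 1) *
              Complex.exp (2 * (Real.pi : ℂ) * Complex.I *
                (((j + 1) * ((p₁ - h) % p₁) : ℕ) : ℂ) / (p₁ : ℂ)) *
              ((t ^ p₁ : ℝ) : ℂ) ^ (((j + 1 : ℕ) : ℂ) / (p₁ : ℂ))).re) =
            fun j : ℕ => 2 * Real.cos (Real.pi * ((j + 1 : ℕ) : ℝ) * (h + h) / p₁) *
              (m (j + 1)).re * t ^ (j + 1) := by
          funext j
          rw [term_right p₁ h (j + 1) hp0 hhp t ht (m (j + 1))]
          have : Real.cos (2 * Real.pi * ((j + 1 : ℕ) : ℝ) * h / p₁) =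
              Real.cos (Real.pi * ((j + 1 : ℕ) : ℝ) * ((h + h : ℕ) : ℝ) / p₁) := by
            congr 1; push_cast; ring
          rw [this]
          push_cast
          ring
        rw [heq] at hre
        convert hre using 2 with j
        push_cast
        ring
    · -- odd case, left side
      obtain ⟨h, rfl⟩ := ho
      have hhp : h < p₁ := by omega
      have hh' : p₁ - 1 - h < p₁ := by omega
      set k : ℝ := k₀ - t ^ p₁ with hkdef
      have hkk : k - k₀ = -(t ^ p₁) := by rw [hkdef]; ring
      have hkabs : |k - k₀| < ε := by rw [hkk, abs_neg, abs_of_pos hxp]; exact hxε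
      have hs1 := hseries h hhp k hkabs
      have hs2 := hseries (p₁ - 1 - h) hh' k hkabs
      rw [hkk] at hs1 hs2
      have hre := Complex.hasSum_re (hs1.add hs2)
      refine ⟨((lam h k - lam₀) + (lam (p₁ - 1 - h) k - lam₀)).re, ?_, ?_⟩
      · have h1 := hmax h hhp k hkabs
        have h2 := hmax _ hh' k hkabs
        simp only [Complex.add_re, Complex.sub_re]
        linarith
      · have heq : (fun j : ℕ =>
            (m (j + 1) *
              Complex.exp (2 * (Real.pi : ℂ) * Complex.I * (((j + 1) * h : ℕ) : ℂ) / (p₁ : ℂ)) *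
              ((-(t ^ p₁) : ℝ) : ℂ) ^ (((j + 1 : ℕ) : ℂ) / (p₁ : ℂ)) +
             m (j + 1) *
              Complex.exp (2 * (Real.pi : ℂ) * Complex.I *
                (((j + 1) * (p₁ - 1 - h) : ℕ) : ℂ) / (p₁ : ℂ)) *
              ((-(t ^ p₁) : ℝ) : ℂ) ^ (((j + 1 : ℕ) : ℂ) / (p₁ : ℂ))).re) =
            fun j : ℕ => 2 * Real.cos (Real.pi * ((j + 1 : ℕ) : ℝ) * (2 * h + 1) / p₁) *
              (m (j + 1)).re * t ^ (j + 1) := by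
          funext j
          rw [term_left p₁ h (j + 1) hp0 hhp t ht (m (j + 1))]
        rw [heq] at hre
        convert hre using 2 with j
        push_cast
        ring
  · -- zero coefficients
    intro j hj
    have h1 : 1 ≤ j + 1 := by omega
    have h2 : j + 1 < n := by omega
    simp [hprev (j + 1) h1 h2]

/-- Puiseux series branches bounded above by `Re λ₀` force the first
coefficient with nonzero real part to occur at an index `n = l * p₁` with `l` even,
and its real part is negative. -/
theorem stmt_0 (p₁ : ℕ) (hp : 2 ≤ p₁) (lam₀ : ℂ) (m : ℕ → ℂ) (k₀ ε : ℝ) (hε : 0 < ε)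
    (lam : ℕ → ℝ → ℂ)
    (hseries : ∀ h < p₁, ∀ k : ℝ, |k - k₀| < ε →
      HasSum (fun n : ℕ =>
        m (n + 1) *
          Complex.exp (2 * (Real.pi : ℂ) * Complex.I * (((n + 1) * h : ℕ) : ℂ) / (p₁ : ℂ)) *
          ((k - k₀ : ℝ) : ℂ) ^ (((n + 1 : ℕ) : ℂ) / (p₁ : ℂ)))
        (lam h k - lam₀))
    (hmax : ∀ h < p₁, ∀ k : ℝ, |k - k₀| < ε → (lam h k).re ≤ lam₀.re)
    (n : ℕ) (hn1 : 1 ≤ n) (hfirst : (m n).re ≠ 0)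
    (hprev : ∀ j, 1 ≤ j → j < n → (m j).re = 0) :
    ∃ l : ℕ, Even l ∧ n = l * p₁ ∧ (m (l * p₁)).re < 0 := by
  have hp0 : 0 < p₁ := by omega
  have hpR : (p₁ : ℝ) ≠ 0 := Nat.cast_ne_zero.mpr hp0.ne'
  have hck : ∀ b : ℕ, b < 2 * p₁ → Real.cos (Real.pi * n * b / p₁) * (m n).re ≤ 0 :=
    keyIneq p₁ hp lam₀ m k₀ ε hε lam hseries hmax n hn1 hprev
  have hneg : (m n).re < 0 := by
    have h0 := hck 0 (by omega)
    simp at h0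
    exact lt_of_le_of_ne h0 hfirst
  have hcos : ∀ b : ℕ, 0 ≤ Real.cos (Real.pi * n * b / p₁) := by
    intro b
    obtain ⟨q, b', hb', hdec⟩ : ∃ q b', b' < 2 * p₁ ∧ b = 2 * p₁ * q + b' :=
      ⟨b / (2 * p₁), b % (2 * p₁), Nat.mod_lt _ (by omega), (Nat.div_add_mod b (2 * p₁)).symm⟩
    subst hdec
    have hangle : Real.pi * n * ((2 * p₁ * q + b' : ℕ) : ℝ) / p₁ =
        Real.pi * n * (b' : ℝ) / p₁ + (((n * q : ℕ) : ℤ) : ℝ) * (2 * Real.pi) := by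
      push_cast
      field_simp
      ring
    rw [hangle, Real.cos_add_int_mul_two_pi]
    have hc := hck b' hb'
    by_contra hcon
    push_neg at hcon
    nlinarith
  have hx : Real.cos (Real.pi * n / p₁) = 1 := by
    apply cos_one
    intro b
    have := hcos b
    rwa [show Real.pi * n * b / p₁ = b * (Real.pi * n / p₁) by ring] at this
  rw [Real.cos_eq_one_iff] at hx
  obtain ⟨z, hz⟩ := hx
  have hnz : (n : ℝ) = 2 * z * p₁ := by
    have hz' : (z : ℝ) * (2 * Real.pi) * (p₁ : ℝ) = Real.pi * n := by
      calc (z : ℝ) * (2 * Real.pi) * (p₁ : ℝ) = Real.pi * n / p₁ * p₁ := by rw [hz]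
        _ = Real.pi * n := by field_simp
    have hπn : Real.pi * (n : ℝ) = Real.pi * (2 * z * p₁) := by linarith
    have := mul_left_cancel₀ Real.pi_ne_zero hπn
    linarith
  have hzpos : 0 < z := by
    have hn' : (0:ℝ) < n := by exact_mod_cast hn1
    have hpp : (0:ℝ) < (p₁ : ℝ) := by exact_mod_cast hp0
    by_contra hc
    push_neg at hc
    have hzr : (z:ℝ) ≤ 0 := by exact_mod_cast hc
    nlinarith
  have hzz : ((z.toNat : ℕ) : ℝ) = (z : ℝ) := by exact_mod_cast Int.toNat_of_nonneg hzpos.le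
  have hn_eq : n = 2 * z.toNat * p₁ := by
    have hr : ((2 * z.toNat * p₁ : ℕ) : ℝ) = (n : ℝ) := by
      push_cast
      rw [hzz, hnz]
    exact_mod_cast hr.symm
  exact ⟨2 * z.toNat, ⟨z.toNat, by ring⟩, hn_eq, by rwa [← hn_eq]⟩
end

section
/- If complex numbers m_n and a p₁-th root of unity ω = exp(πi n/p₁)-powers satisfy Re(m_n exp(πni j/p₁)) ≤ 0 for all j = 0,1,…,2p₁−1, and n/p₁ is not an integer, then m_n = 0. -/
/-- if the `2p₁` points `m_n · exp(πi n j / p₁)` all lie in the closed left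
half plane and `n/p₁` is not an integer, then `m_n = 0`. -/
theorem stmt_1 (p₁ n : ℕ) (hp : 2 ≤ p₁) (hn : 1 ≤ n) (m : ℂ)
    (h : ∀ j < 2 * p₁,
      (m * Complex.exp ((Real.pi : ℂ) * (n : ℂ) * Complex.I * (j : ℂ) / (p₁ : ℂ))).re ≤ 0)
    (hnd : ¬ p₁ ∣ n) : m = 0 := by
  have hp0 : (p₁ : ℂ) ≠ 0 := by exact_mod_cast (by omega : p₁ ≠ 0)
  have hπ : (Real.pi : ℂ) ≠ 0 := by exact_mod_cast Real.pi_ne_zero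
  set z : ℂ := (Real.pi : ℂ) * (n : ℂ) * Complex.I / (p₁ : ℂ) with hz
  set ω : ℂ := Complex.exp z with hω
  -- ω^2 = 1 would force p₁ ∣ n
  have hω2 : ω ^ 2 ≠ 1 := by
    intro h2
    rw [hω, ← Complex.exp_nat_mul, Complex.exp_eq_one_iff] at h2
    obtain ⟨k, hk⟩ := h2
    rw [hz] at hk
    have hnk : (n : ℂ) = ((k * (p₁ : ℤ) : ℤ) : ℂ) := by
      push_cast
      have h1 : (2 * (Real.pi : ℂ) * Complex.I) * (n : ℂ)
          = (2 * (Real.pi : ℂ) * Complex.I) * ((k : ℂ) * (p₁ : ℂ)) := by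
        field_simp at hk
        push_cast at hk
        linear_combination (Real.pi : ℂ) * Complex.I * hk
      exact mul_left_cancel₀ (mul_ne_zero (mul_ne_zero two_ne_zero hπ) Complex.I_ne_zero) h1
    have : (n : ℤ) = k * (p₁ : ℤ) := by exact_mod_cast hnk
    exact hnd (Int.ofNat_dvd.mp ⟨k, by linarith⟩)
  have hω1 : ω ≠ 1 := fun h1 => hω2 (by rw [h1]; ring)
  -- geometric sum is zero
  have hpow : ∀ j : ℕ, Complex.exp ((Real.pi : ℂ) * (n : ℂ) * Complex.I * (j : ℂ) / (p₁ : ℂ))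
      = ω ^ j := by
    intro j
    rw [hω, ← Complex.exp_nat_mul, hz]
    ring_nf
  have hsum : ∑ j ∈ Finset.range (2 * p₁), ω ^ j = 0 := by
    rw [geom_sum_eq hω1]
    have : ω ^ (2 * p₁) = 1 := by
      rw [hω, ← Complex.exp_nat_mul, Complex.exp_eq_one_iff]
      refine ⟨n, ?_⟩
      rw [hz]
      push_cast
      field_simp
    rw [this]
    simp
  -- all real parts vanish
  have hre : ∀ j ∈ Finset.range (2 * p₁), (m * ω ^ j).re = 0 := by
    have hsum0 : ∑ j ∈ Finset.range (2 * p₁), (m * ω ^ j).re = 0 := by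
      rw [← Complex.re_sum, ← Finset.mul_sum, hsum, mul_zero, Complex.zero_re]
    refine (Finset.sum_eq_zero_iff_of_nonpos ?_).mp hsum0
    intro j hj
    rw [← hpow j]
    exact h j (Finset.mem_range.mp hj)
  by_contra hm
  have h0 : m.re = 0 := by
    have := hre 0 (Finset.mem_range.mpr (by omega))
    simpa using this
  have h1 : (m * ω).re = 0 := by
    have := hre 1 (Finset.mem_range.mpr (by omega))
    simpa using this
  have hmim : m.im ≠ 0 := by
    intro h'
    exact hm (Complex.ext h0 h')
  have hωim : ω.im = 0 := by
    have : m.re * ω.re - m.im * ω.im = 0 := by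
      rw [← Complex.mul_re]; exact h1
    rw [h0] at this
    simp at this
    rcases this with h' | h'
    · exact absurd h' hmim
    · exact h'
  -- ω is real with |ω| = 1, so ω² = 1
  have habs : ‖ω‖ = 1 := by
    rw [hω, Complex.norm_exp]
    have : z.re = 0 := by
      rw [hz]
      simp [Complex.div_re]
    rw [this, Real.exp_zero]
  have : ω ^ 2 = 1 := by
    have hωre : ω = (ω.re : ℂ) := Complex.ext rfl (by simp [hωim])
    have : |ω.re| = 1 := by
      rw [← habs, hωre]
      simp
    have h2 : ω.re ^ 2 = 1 := by
      rw [← sq_abs, this]; norm_num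
    rw [hωre]
    exact_mod_cast h2
  exact hω2 this
end

section
/- Suppose a C⁰-semigroup S(t) on a Banach space X satisfies ‖S(t)‖ ≤ M e^{μ t} for all t ≥ 0 with μ < w, and g : [0,∞) → X is continuous with ‖g(t)‖ ≤ C_g e^{wt}/(1+t^b) for some b > 0. Then u(t) = ∫₀^t S(t−s) g(s) ds satisfies ‖u(t)‖ ≤ C C_g e^{wt}/(1+t^b) for all t ≥ 0, where C depends only on M, μ, w, b. -/
open Real MeasureTheory intervalIntegral

private lemma rpow_le_exp_aux {b c : ℝ} (hb : 0 < b) (hc : 0 < c) {t : ℝ} (ht : 0 ≤ t) :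
    t ^ b ≤ Real.exp (b * Real.log (b / c) - b) * Real.exp (c * t) := by
  rcases eq_or_lt_of_le ht with rfl | ht
  · rw [Real.zero_rpow hb.ne']
    positivity
  · rw [Real.rpow_def_of_pos ht, ← Real.exp_add]
    apply Real.exp_le_exp.2
    have h1 : Real.log t ≤ Real.log (b / c) + (c * t / b - 1) := by
      have h2 := Real.log_le_sub_one_of_pos (show 0 < c * t / b by positivity)
      have hlog : Real.log t = Real.log (b / c) + Real.log (c * t / b) := by
        rw [← Real.log_mul (by positivity) (by positivity)]
        congr 1
        field_simp
      linarith
    calc Real.log t * b ≤ (Real.log (b / c) + (c * t / b - 1)) * b :=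
          mul_le_mul_of_nonneg_right h1 hb.le
      _ = b * Real.log (b / c) - b + c * t := by field_simp; ring

private lemma integral_exp_mul' {c : ℝ} (hc : 0 < c) (a b : ℝ) :
    ∫ s in a..b, Real.exp (c * s) = (Real.exp (c * b) - Real.exp (c * a)) / c := by
  have hd : ∀ x ∈ Set.uIcc a b, HasDerivAt (fun s => Real.exp (c * s) / c)
      (Real.exp (c * x)) x := by
    intro x _
    have h1 : HasDerivAt (fun s : ℝ => c * s) c x := by
      simpa using (hasDerivAt_id x).const_mul c
    have h2 := h1.exp.div_const c
    simpa [mul_div_assoc, hc.ne'] using h2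
  rw [intervalIntegral.integral_eq_sub_of_hasDerivAt hd
    ((Real.continuous_exp.comp (continuous_const.mul continuous_id)).intervalIntegrable a b)]
  ring

private lemma key_integral {α b : ℝ} (hα : 0 < α) (hb : 0 < b) :
    ∃ K > 0, ∀ t : ℝ, 0 ≤ t →
      (∫ s in (0:ℝ)..t, Real.exp (α * s) / (1 + s ^ b)) ≤ K * Real.exp (α * t) / (1 + t ^ b) := by
  set c : ℝ := α / 2 with hc_def
  have hc : 0 < c := by positivity
  set K₂ : ℝ := Real.exp (1 * Real.log (1 / c) - 1) with hK₂
  set K₃ : ℝ := Real.exp ((b + 1) * Real.log ((b + 1) / c) - (b + 1)) with hK₃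
  refine ⟨(K₂ + K₃) / 2 + (2 : ℝ) ^ b / α, by positivity, fun t ht => ?_⟩
  have htb : (0:ℝ) < 1 + t ^ b := by
    have := Real.rpow_nonneg ht b; linarith
  have hcont : ∀ u v : ℝ, Set.uIcc u v ⊆ Set.Icc 0 t →
      IntervalIntegrable (fun s => Real.exp (α * s) / (1 + s ^ b)) volume u v := by
    intro u v huv
    apply ContinuousOn.intervalIntegrable
    apply ContinuousOn.div
    · exact (Real.continuous_exp.comp (continuous_const.mul continuous_id)).continuousOn
    · exact (continuous_const.add (Real.continuous_rpow_const hb.le)).continuousOn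
    · intro s hs
      have hs0 : 0 ≤ s := (huv hs).1
      have := Real.rpow_nonneg hs0 b
      positivity
  have ht2 : (0:ℝ) ≤ t / 2 := by linarith
  have hsplit : (∫ s in (0:ℝ)..t, Real.exp (α * s) / (1 + s ^ b))
      = (∫ s in (0:ℝ)..(t/2), Real.exp (α * s) / (1 + s ^ b))
        + ∫ s in (t/2)..t, Real.exp (α * s) / (1 + s ^ b) := by
    rw [intervalIntegral.integral_add_adjacent_intervals]
    · exact hcont 0 (t/2) (by rw [Set.uIcc_of_le ht2]; exact Set.Icc_subset_Icc le_rfl (by linarith))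
    · exact hcont (t/2) t (by rw [Set.uIcc_of_le (by linarith)]; exact Set.Icc_subset_Icc ht2 le_rfl)
  -- first piece
  have hI₁ : (∫ s in (0:ℝ)..(t/2), Real.exp (α * s) / (1 + s ^ b))
      ≤ Real.exp (α * (t/2)) * (t/2) := by
    have hb1 : ∀ s ∈ Set.uIoc (0:ℝ) (t/2), ‖Real.exp (α * s) / (1 + s ^ b)‖ ≤ Real.exp (α * (t/2)) := by
      intro s hs
      rw [Set.uIoc_of_le ht2] at hs
      have hs0 : 0 ≤ s := le_of_lt hs.1
      have hsb : (0:ℝ) ≤ s ^ b := Real.rpow_nonneg hs0 b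
      rw [Real.norm_eq_abs, abs_of_nonneg (by positivity)]
      calc Real.exp (α * s) / (1 + s ^ b) ≤ Real.exp (α * s) / 1 := by
            apply div_le_div_of_nonneg_left (Real.exp_pos _).le (by norm_num) (by linarith)
        _ = Real.exp (α * s) := div_one _
        _ ≤ Real.exp (α * (t/2)) := Real.exp_le_exp.2 (by nlinarith [hs.2])
    have := intervalIntegral.norm_integral_le_of_norm_le_const hb1
    calc (∫ s in (0:ℝ)..(t/2), Real.exp (α * s) / (1 + s ^ b))
        ≤ ‖∫ s in (0:ℝ)..(t/2), Real.exp (α * s) / (1 + s ^ b)‖ := le_norm_self _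
      _ ≤ Real.exp (α * (t/2)) * |t/2 - 0| := this
      _ = Real.exp (α * (t/2)) * (t/2) := by rw [sub_zero, abs_of_nonneg ht2]
  -- second piece
  have hI₂ : (∫ s in (t/2)..t, Real.exp (α * s) / (1 + s ^ b))
      ≤ (2:ℝ) ^ b / (1 + t ^ b) * (Real.exp (α * t) / α) := by
    have h2b : (1:ℝ) ≤ (2:ℝ) ^ b := Real.one_le_rpow (by norm_num) hb.le
    have hbound : ∀ s ∈ Set.uIoc (t/2) t,
        ‖Real.exp (α * s) / (1 + s ^ b)‖ ≤ (2:ℝ) ^ b / (1 + t ^ b) * Real.exp (α * s) := by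
      intro s hs
      rw [Set.uIoc_of_le (by linarith)] at hs
      have hs0 : 0 ≤ s := le_trans ht2 hs.1.le
      have hsb : (0:ℝ) ≤ s ^ b := Real.rpow_nonneg hs0 b
      rw [Real.norm_eq_abs, abs_of_nonneg (by positivity)]
      have hkey : 1 + t ^ b ≤ (2:ℝ) ^ b * (1 + s ^ b) := by
        have h1 : t ^ b ≤ (2 * s) ^ b := Real.rpow_le_rpow ht (by linarith [hs.1.le]) hb.le
        have h2 : (2 * s : ℝ) ^ b = 2 ^ b * s ^ b := Real.mul_rpow (by norm_num) hs0
        nlinarith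
      rw [div_le_iff₀ (by positivity), div_mul_eq_mul_div, div_mul_eq_mul_div, le_div_iff₀ htb]
      calc Real.exp (α * s) * (1 + t ^ b) ≤ Real.exp (α * s) * ((2:ℝ) ^ b * (1 + s ^ b)) :=
            mul_le_mul_of_nonneg_left hkey (Real.exp_pos _).le
        _ = 2 ^ b * Real.exp (α * s) * (1 + s ^ b) := by ring
    have hgint : IntervalIntegrable (fun s => (2:ℝ) ^ b / (1 + t ^ b) * Real.exp (α * s))
        volume (t/2) t :=
      (Continuous.intervalIntegrable (by continuity) _ _)
    have hn := intervalIntegral.norm_integral_le_abs_of_norm_le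
      ((MeasureTheory.ae_restrict_mem measurableSet_uIoc).mono fun s hs => hbound s hs) hgint
    calc (∫ s in (t/2)..t, Real.exp (α * s) / (1 + s ^ b))
          ≤ ‖∫ s in (t/2)..t, Real.exp (α * s) / (1 + s ^ b)‖ := le_norm_self _
        _ ≤ |∫ s in (t/2)..t, (2:ℝ) ^ b / (1 + t ^ b) * Real.exp (α * s)| := hn
        _ = |(2:ℝ) ^ b / (1 + t ^ b) * ((Real.exp (α * t) - Real.exp (α * (t/2))) / α)| := by
            rw [intervalIntegral.integral_const_mul, integral_exp_mul' hα]
        _ ≤ (2:ℝ) ^ b / (1 + t ^ b) * (Real.exp (α * t) / α) := by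
            have hee : Real.exp (α * (t/2)) ≤ Real.exp (α * t) :=
              Real.exp_le_exp.2 (by nlinarith)
            rw [abs_of_nonneg (mul_nonneg (by positivity)
              (div_nonneg (by linarith) hα.le))]
            gcongr
            linarith [(Real.exp_pos (α * (t/2))).le]
  -- combine
  rw [hsplit, le_div_iff₀ htb]
  have hmain1 : Real.exp (α * (t/2)) * (t/2) * (1 + t ^ b) ≤ (K₂ + K₃) / 2 * Real.exp (α * t) := by
    have e1 : t ^ (1:ℝ) ≤ K₂ * Real.exp (c * t) := rpow_le_exp_aux one_pos hc ht
    rw [Real.rpow_one] at e1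
    have e2 : t ^ (b + 1) ≤ K₃ * Real.exp (c * t) := rpow_le_exp_aux (by linarith) hc ht
    have e3 : t ^ (b + 1) = t ^ b * t := by
      rw [Real.rpow_add' ht (by positivity), Real.rpow_one]
    rw [e3] at e2
    have e4 : Real.exp (α * (t/2)) * Real.exp (c * t) = Real.exp (α * t) := by
      rw [← Real.exp_add]; congr 1; rw [hc_def]; ring
    have hep : (0:ℝ) < Real.exp (α * (t/2)) := Real.exp_pos _
    have e5 : Real.exp (α * (t/2)) * (t/2) * (1 + t ^ b)
        ≤ (K₂ + K₃) / 2 * (Real.exp (α * (t/2)) * Real.exp (c * t)) := by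
      nlinarith [mul_le_mul_of_nonneg_left e1 hep.le, mul_le_mul_of_nonneg_left e2 hep.le]
    rw [e4] at e5
    exact e5
  have hmain2 : (2:ℝ) ^ b / (1 + t ^ b) * (Real.exp (α * t) / α) * (1 + t ^ b)
      ≤ (2:ℝ) ^ b / α * Real.exp (α * t) :=
    le_of_eq (by field_simp)
  calc ((∫ s in (0:ℝ)..(t/2), Real.exp (α * s) / (1 + s ^ b))
        + ∫ s in (t/2)..t, Real.exp (α * s) / (1 + s ^ b)) * (1 + t ^ b)
      ≤ (Real.exp (α * (t/2)) * (t/2) + (2:ℝ) ^ b / (1 + t ^ b) * (Real.exp (α * t) / α))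
          * (1 + t ^ b) := by
        apply mul_le_mul_of_nonneg_right (add_le_add hI₁ hI₂) htb.le
    _ = Real.exp (α * (t/2)) * (t/2) * (1 + t ^ b)
        + (2:ℝ) ^ b / (1 + t ^ b) * (Real.exp (α * t) / α) * (1 + t ^ b) := by ring
    _ ≤ (K₂ + K₃) / 2 * Real.exp (α * t) + 2 ^ b / α * Real.exp (α * t) :=
        add_le_add hmain1 hmain2
    _ = ((K₂ + K₃) / 2 + 2 ^ b / α) * Real.exp (α * t) := by ring


/-- Duhamel bound with forcing `C_g e^{wt}/(1+t^b)`; the constant `C`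
depends only on `M, μ, w, b`. -/
theorem stmt_8 {X : Type*} [NormedAddCommGroup X] [NormedSpace ℝ X] [CompleteSpace X]
    (M μ w b : ℝ) (hM : 0 < M) (hμw : μ < w) (hb : 0 < b) :
    ∃ C > 0, ∀ (S : ℝ → X →L[ℝ] X),
      S 0 = ContinuousLinearMap.id ℝ X →
      (∀ s t : ℝ, 0 ≤ s → 0 ≤ t → S (s + t) = (S s).comp (S t)) →
      (∀ x : X, Continuous fun t => S t x) →
      (∀ t : ℝ, 0 ≤ t → ‖S t‖ ≤ M * Real.exp (μ * t)) →
      ∀ (g : ℝ → X) (C_g : ℝ), 0 < C_g → Continuous g →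
      (∀ t : ℝ, 0 ≤ t → ‖g t‖ ≤ C_g * Real.exp (w * t) / (1 + t ^ b)) →
      ∀ t : ℝ, 0 ≤ t →
        ‖∫ s in (0 : ℝ)..t, S (t - s) (g s)‖ ≤ C * C_g * Real.exp (w * t) / (1 + t ^ b) := by
  obtain ⟨K, hK, hKey⟩ := key_integral (show (0:ℝ) < w - μ by linarith) hb
  refine ⟨M * K, by positivity, fun S hS0 hSsemi hScont hSnorm g C_g hCg hgcont hgbd t ht => ?_⟩
  have htb : (0:ℝ) < 1 + t ^ b := by
    have := Real.rpow_nonneg ht b; linarith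
  have hbound : ∀ s ∈ Set.uIoc (0:ℝ) t, ‖S (t - s) (g s)‖
      ≤ M * C_g * Real.exp (μ * t) * (Real.exp ((w - μ) * s) / (1 + s ^ b)) := by
    intro s hs
    rw [Set.uIoc_of_le ht] at hs
    have hs0 : 0 ≤ s := hs.1.le
    have hts : 0 ≤ t - s := by linarith [hs.2]
    have hsb : (0:ℝ) ≤ s ^ b := Real.rpow_nonneg hs0 b
    have hexp : Real.exp (μ * (t - s)) * Real.exp (w * s)
        = Real.exp (μ * t) * Real.exp ((w - μ) * s) := by
      rw [← Real.exp_add, ← Real.exp_add]; ring_nf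
    calc ‖S (t - s) (g s)‖ ≤ ‖S (t - s)‖ * ‖g s‖ := (S (t - s)).le_opNorm _
      _ ≤ (M * Real.exp (μ * (t - s))) * (C_g * Real.exp (w * s) / (1 + s ^ b)) :=
          mul_le_mul (hSnorm (t - s) hts) (hgbd s hs0) (norm_nonneg _) (by positivity)
      _ = M * C_g * (Real.exp (μ * (t - s)) * Real.exp (w * s)) / (1 + s ^ b) := by ring
      _ = M * C_g * (Real.exp (μ * t) * Real.exp ((w - μ) * s)) / (1 + s ^ b) := by rw [hexp]
      _ = M * C_g * Real.exp (μ * t) * (Real.exp ((w - μ) * s) / (1 + s ^ b)) := by ring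
  have hφint : IntervalIntegrable
      (fun s => M * C_g * Real.exp (μ * t) * (Real.exp ((w - μ) * s) / (1 + s ^ b)))
      volume 0 t := by
    apply ContinuousOn.intervalIntegrable
    apply ContinuousOn.mul continuousOn_const
    apply ContinuousOn.div
    · exact (Real.continuous_exp.comp (continuous_const.mul continuous_id)).continuousOn
    · exact (continuous_const.add (Real.continuous_rpow_const hb.le)).continuousOn
    · intro s hs
      rw [Set.uIcc_of_le ht] at hs
      have := Real.rpow_nonneg hs.1 b
      positivity
  have hn := intervalIntegral.norm_integral_le_abs_of_norm_le
    ((MeasureTheory.ae_restrict_mem measurableSet_uIoc).mono fun s hs => hbound s hs) hφint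
  have hintnn : (0:ℝ) ≤ ∫ s in (0:ℝ)..t, Real.exp ((w - μ) * s) / (1 + s ^ b) := by
    apply intervalIntegral.integral_nonneg ht
    intro s hs
    have := Real.rpow_nonneg hs.1 b
    positivity
  calc ‖∫ s in (0:ℝ)..t, S (t - s) (g s)‖
      ≤ |∫ s in (0:ℝ)..t,
          M * C_g * Real.exp (μ * t) * (Real.exp ((w - μ) * s) / (1 + s ^ b))| := hn
    _ = M * C_g * Real.exp (μ * t) * ∫ s in (0:ℝ)..t, Real.exp ((w - μ) * s) / (1 + s ^ b) := by
        rw [intervalIntegral.integral_const_mul, abs_of_nonneg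
          (mul_nonneg (by positivity) hintnn)]
    _ ≤ M * C_g * Real.exp (μ * t) * (K * Real.exp ((w - μ) * t) / (1 + t ^ b)) :=
        mul_le_mul_of_nonneg_left (hKey t ht) (by positivity)
    _ = M * K * C_g * Real.exp (w * t) / (1 + t ^ b) := by
        rw [show Real.exp (w * t) = Real.exp (μ * t) * Real.exp ((w - μ) * t) by
          rw [← Real.exp_add]; ring_nf]
        ring
end

section
/- Let L be a bounded self-adjoint operator on a Hilbert space X whose restriction L₁ to R(L) = (ker L)^⊥ has bounded inverse, and suppose JL generates a C⁰-semigroup on R(L) with ‖e^{tJL}|_{R(L)}‖ ≤ C e^{ν t} for t ≥ 0. Then the operator LJ restricted to R(L) satisfies e^{t LJ|_{R(L)}} = L₁ (P¹ e^{tJL}|_{R(L)}) L₁^{-1} and hence ‖e^{t LJ|_{R(L)}}‖ ≤ C' e^{ν t} for t ≥ 0, where P¹ is the orthogonal projection onto R(L). -/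
/-- with `J` skew-adjoint, `L` self-adjoint with finite-dimensional kernel,
`L` boundedly invertible on `Y = (ker L)ᗮ = R(L)`, and `T t = e^{tJL}|_{R(L)}` satisfying
`‖T t‖ ≤ C e^{νt}`, the conjugated family `U t x = L (T t (L₁⁻¹ x))` is the semigroup
`e^{t LJ|_{R(L)}}` (it solves `u' = L J u`) and satisfies
`‖U t x‖ ≤ C ‖L‖ ‖L₁⁻¹‖ e^{νt} ‖x‖` for `t ≥ 0`, `x ∈ Y`. -/
theorem stmt_16 {X : Type*} [NormedAddCommGroup X] [InnerProductSpace ℂ X] [CompleteSpace X]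
    (J L L₁inv : X →L[ℂ] X)
    (hJ : ∀ x y : X, (inner ℂ (J x) y : ℂ) = -(inner ℂ x (J y) : ℂ))
    (hL : ∀ x y : X, (inner ℂ (L x) y : ℂ) = inner ℂ x (L y))
    (hker : FiniteDimensional ℂ (LinearMap.ker L.toLinearMap))
    (Y : Submodule ℂ X) (hY : Y = (LinearMap.ker L.toLinearMap)ᗮ)
    (hLY : ∀ x ∈ Y, L x ∈ Y)
    (hinv1 : ∀ y ∈ Y, L (L₁inv y) = y) (hinv2 : ∀ y ∈ Y, L₁inv (L y) = y)
    (hinvY : ∀ y ∈ Y, L₁inv y ∈ Y)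
    (T : ℝ → X →L[ℂ] X)
    (hT0 : ∀ x ∈ Y, T 0 x = x)
    (hTY : ∀ t : ℝ, ∀ x ∈ Y, T t x ∈ Y)
    (hTderiv : ∀ x ∈ Y, ∀ t : ℝ, HasDerivAt (fun τ => T τ x) (J (L (T t x))) t)
    (C ν : ℝ) (hC : 0 < C)
    (hTbound : ∀ t : ℝ, 0 ≤ t → ∀ x ∈ Y, ‖T t x‖ ≤ C * Real.exp (ν * t) * ‖x‖) :
    (∀ x ∈ Y, ∀ t : ℝ,
      HasDerivAt (fun τ => L (T τ (L₁inv x))) (L (J (L (T t (L₁inv x))))) t) ∧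
    (∀ t : ℝ, 0 ≤ t → ∀ x ∈ Y,
      ‖L (T t (L₁inv x))‖ ≤ C * ‖L‖ * ‖L₁inv‖ * Real.exp (ν * t) * ‖x‖) := by
  constructor
  · intro x hx t
    exact ((L.restrictScalars ℝ).hasFDerivAt.comp_hasDerivAt t (hTderiv (L₁inv x) (hinvY x hx) t))
  · intro t ht x hx
    calc ‖L (T t (L₁inv x))‖ ≤ ‖L‖ * ‖T t (L₁inv x)‖ := L.le_opNorm _
      _ ≤ ‖L‖ * (C * Real.exp (ν * t) * ‖L₁inv x‖) := by
          exact mul_le_mul_of_nonneg_left (hTbound t ht _ (hinvY x hx)) (norm_nonneg _)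
      _ ≤ ‖L‖ * (C * Real.exp (ν * t) * (‖L₁inv‖ * ‖x‖)) := by
          gcongr
          exact L₁inv.le_opNorm x
      _ = C * ‖L‖ * ‖L₁inv‖ * Real.exp (ν * t) * ‖x‖ := by ring
end
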